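/- For every even integer m ≥ 6, the graph H_m admits a proper vertex coloring with 3 colors, and it admits no proper vertex coloring with 2 colors. -/
import Mathlib


open SimpleGraph

/-- Vertex type for the graphs on `2m+1` vertices: `Sum.inl i` is the vertex `pᵢ`,
`Sum.inr (Sum.inl i)` is the vertex `qᵢ` (indices taken modulo `m`),
and `Sum.inr (Sum.inr ())` is the apex vertex `a`. -/
abbrev GVert (m : ℕ) := Sum (ZMod m) (Sum (ZMod m) Unit)

/-- The vertex `pᵢ`. -/
def pV {m : ℕ} (i : ZMod m) : GVert m := Sum.inl i

/-- The vertex `qᵢ`. -/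
def qV {m : ℕ} (i : ZMod m) : GVert m := Sum.inr (Sum.inl i)

/-- The apex vertex `a`. -/
def aV (m : ℕ) : GVert m := Sum.inr (Sum.inr ())

/-- The graph `H_m` (intended for even `m ≥ 6`): edges are `a qᵢ` for all `i`,
`pᵢ pᵢ₊₁` for all `i`, and `pᵢ q_{i + (2k-1)}` for all `i` and `0 ≤ k ≤ (m-2)/2`,
all indices taken modulo `m`. -/
def HGraph (m : ℕ) : SimpleGraph (GVert m) :=
  SimpleGraph.fromRel (fun u v =>
    (∃ i : ZMod m, u = aV m ∧ v = qV i) ∨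
    (∃ i : ZMod m, u = pV i ∧ v = pV (i + 1)) ∨
    (∃ (i : ZMod m) (k : ℕ), k ≤ (m - 2) / 2 ∧
      u = pV i ∧ v = qV (i + (2 * (k : ZMod m) - 1))))

/-- For every even integer `m ≥ 6`, the graph `H_m` admits a proper vertex coloring
with `3` colors but none with `2` colors. -/
theorem hGraph_three_colorable_not_two (m : ℕ) (h6 : 6 ≤ m) (heven : Even m) :
    (HGraph m).Colorable 3 ∧ ¬ (HGraph m).Colorable 2 := by
  haveI : NeZero m := ⟨by omega⟩
  haveI : Fact (1 < m) := ⟨by omega⟩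
  have hdvd : (2 : ℕ) ∣ m := heven.two_dvd
  constructor
  · -- 3-colorable
    set f : ZMod m →+* ZMod 2 := ZMod.castHom hdvd (ZMod 2) with hf
    let col : GVert m → Fin 3 := fun v =>
      match v with
      | .inl i => ⟨(f i).val, by have := (f i).val_lt; omega⟩
      | .inr (.inl j) => ⟨(f j).val, by have := (f j).val_lt; omega⟩
      | .inr (.inr _) => ⟨2, by omega⟩
    have key : ∀ u v : GVert m,
        ((∃ i : ZMod m, u = aV m ∧ v = qV i) ∨
        (∃ i : ZMod m, u = pV i ∧ v = pV (i + 1)) ∨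
        (∃ (i : ZMod m) (k : ℕ), k ≤ (m - 2) / 2 ∧
          u = pV i ∧ v = qV (i + (2 * (k : ZMod m) - 1)))) → col u ≠ col v := by
      rintro u v (⟨i, rfl, rfl⟩ | ⟨i, rfl, rfl⟩ | ⟨i, k, hk, rfl, rfl⟩)
      · simp only [col, aV, qV]
        intro h
        have h2 := congrArg Fin.val h
        simp only [] at h2
        have := (f i).val_lt
        omega
      · simp only [col, pV]
        intro h
        have h2 := congrArg Fin.val h
        simp only [] at h2
        rw [map_add, map_one] at h2
        have hgen : ∀ x : ZMod 2, x.val ≠ (x + 1).val := by decide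
        exact hgen (f i) h2
      · simp only [col, pV, qV]
        intro h
        have h2 := congrArg Fin.val h
        simp only [] at h2
        rw [map_add, map_sub, map_mul, map_natCast, map_one, map_ofNat] at h2
        have hgen : ∀ x y : ZMod 2, x.val ≠ (x + (2 * y - 1)).val := by decide
        exact hgen (f i) (k : ZMod 2) h2
    refine ⟨SimpleGraph.Coloring.mk col ?_⟩
    intro u v huv
    rw [HGraph, fromRel_adj] at huv
    rcases huv.2 with h | h
    · exact key u v h
    · exact (key v u h).symm
  · rintro ⟨C⟩
    have hA : ∀ i : ZMod m, (HGraph m).Adj (aV m) (qV i) := by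
      intro i
      rw [HGraph, fromRel_adj]
      exact ⟨by simp [aV, qV], Or.inl (Or.inl ⟨i, rfl, rfl⟩)⟩
    have hP : ∀ i : ZMod m, (HGraph m).Adj (pV i) (pV (i + 1)) := by
      intro i
      rw [HGraph, fromRel_adj]
      refine ⟨by simp [pV, left_eq_add], Or.inl (Or.inr (Or.inl ⟨i, rfl, rfl⟩))⟩
    have hPQ : ∀ (i : ZMod m) (k : ℕ), k ≤ (m - 2) / 2 →
        (HGraph m).Adj (pV i) (qV (i + (2 * (k : ZMod m) - 1))) := by
      intro i k hk
      rw [HGraph, fromRel_adj]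
      exact ⟨by simp [pV, qV], Or.inl (Or.inr (Or.inr ⟨i, k, hk, rfl, rfl⟩))⟩
    have e1 : (HGraph m).Adj (aV m) (qV 1) := hA 1
    have e2 : (HGraph m).Adj (pV 2) (qV 1) := by
      have := hPQ 2 0 (by omega)
      have hv : (2 + (2 * ((0 : ℕ) : ZMod m) - 1) : ZMod m) = 1 := by push_cast; ring
      rwa [hv] at this
    have e3 : (HGraph m).Adj (pV 2) (pV 3) := by
      have := hP 2
      norm_num at this
      exact this
    have e4 : (HGraph m).Adj (pV 3) (qV 4) := by
      have := hPQ 3 1 (by omega)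
      have hv : (3 + (2 * ((1 : ℕ) : ZMod m) - 1) : ZMod m) = 4 := by push_cast; ring
      rwa [hv] at this
    have e5 : (HGraph m).Adj (aV m) (qV 4) := hA 4
    have n1 := C.valid e1
    have n2 := C.valid e2
    have n3 := C.valid e3
    have n4 := C.valid e4
    have n5 := C.valid e5
    have vne : ∀ x y : GVert m, C x ≠ C y → (C x).val ≠ (C y).val :=
      fun x y h hv => h (Fin.val_injective hv)
    have l1 := vne _ _ n1
    have l2 := vne _ _ n2
    have l3 := vne _ _ n3
    have l4 := vne _ _ n4
    have l5 := vne _ _ n5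
    have b1 := (C (aV m)).is_lt
    have b2 := (C (qV (1 : ZMod m))).is_lt
    have b3 := (C (pV (2 : ZMod m))).is_lt
    have b4 := (C (pV (3 : ZMod m))).is_lt
    have b5 := (C (qV (4 : ZMod m))).is_lt
    omega
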